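/- Let G be a finite connected weighted graph with positive edge weights and total weight W. For any two distinct vertices s, t, the commute time satisfies H_{s,t} + H_{t,s} = 2W·R_{s,t}, where R_{s,t} is the effective resistance between s and t. -/

import Mathlib

noncomputable section

variable {V : Type*} [Fintype V] [DecidableEq V]

/-- A flow from `σ` to `M`: antisymmetric, supported on edges, with net outflow
`σ u` at every unmarked vertex. -/
def IsFlow (wt : V → V → ℝ) (σ : V → ℝ) (M : Set V) (p : V → V → ℝ) : Prop :=
  (∀ u v, p v u = -p u v) ∧ (∀ u v, p u v ≠ 0 → 0 < wt u v) ∧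
    (∀ u ∉ M, ∑ v, p u v = σ u)

/-- The energy `Σ_e p_e²/w_e` of a flow (each undirected edge counted once). -/
def flowEnergy (wt p : V → V → ℝ) : ℝ :=
  (1 / 2) * ∑ u, ∑ v, (p u v) ^ 2 / wt u v

/-- The effective resistance between `s` and `t`: the infimum of energies of
unit flows from `s` to `t`. -/
def effResPt (wt : V → V → ℝ) (s t : V) : ℝ :=
  sInf {x | ∃ p, IsFlow wt (fun u => if u = s then 1 else 0) {t} p ∧ x = flowEnergy wt p}

/-! The potential `φ = (H_{·,t} - H_{·,s}) / 2W` has Laplacian `δ_s - δ_t`: each hitting time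
has Laplacian equal to the degree away from its target, and `-2W` plus the degree at it. Hence
the current `w_{uv} (φ u - φ v)` is a unit flow from `s` to `t`. By Thomson's principle it has
least energy among such flows, and its energy is `φ s - φ t = (H_{s,t} + H_{t,s}) / 2W`. -/

section

omit [DecidableEq V]

theorem sum_sum_sub_mul_of_antisymm {r : V → V → ℝ} (hr : ∀ u v, r v u = -r u v) (g : V → ℝ) :
    ∑ u, ∑ v, (g u - g v) * r u v = 2 * ∑ u, g u * ∑ v, r u v := by
  have hswap : ∑ u, ∑ v, g v * r u v = -∑ u, g u * ∑ v, r u v := by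
    rw [Finset.sum_comm, ← Finset.sum_neg_distrib]
    refine Finset.sum_congr rfl fun v _ => ?_
    simp only [hr v, Finset.mul_sum, mul_neg, Finset.sum_neg_distrib]
  have hdirect : ∑ u, ∑ v, g u * r u v = ∑ u, g u * ∑ v, r u v := by
    simp only [Finset.mul_sum]
  simp only [sub_mul, Finset.sum_sub_distrib, hdirect, hswap]
  ring

theorem sum_sum_eq_zero_of_antisymm {r : V → V → ℝ} (hr : ∀ u v, r v u = -r u v) :
    ∑ u, ∑ v, r u v = 0 := by
  have h := sum_sum_sub_mul_of_antisymm hr (fun _ => 1)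
  simp only [sub_self, zero_mul, Finset.sum_const_zero, one_mul] at h
  linarith

def potentialFlow (wt : V → V → ℝ) (φ : V → ℝ) (u v : V) : ℝ :=
  wt u v * (φ u - φ v)

def laplacian (wt : V → V → ℝ) (φ : V → ℝ) (u : V) : ℝ :=
  ∑ v, potentialFlow wt φ u v

variable {wt : V → V → ℝ}

omit [Fintype V] in
theorem potentialFlow_antisymm (hsymm : ∀ u v, wt u v = wt v u) (φ : V → ℝ) (u v : V) :
    potentialFlow wt φ v u = -potentialFlow wt φ u v := by
  rw [potentialFlow, potentialFlow, hsymm]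
  ring

omit [Fintype V] in
theorem potentialFlow_eq_zero {φ : V → ℝ} {u v : V} (h : wt u v = 0) :
    potentialFlow wt φ u v = 0 := by
  rw [potentialFlow, h, zero_mul]

theorem laplacian_sub (f g : V → ℝ) (u : V) :
    laplacian wt (f - g) u = laplacian wt f u - laplacian wt g u := by
  simp only [laplacian, potentialFlow, ← Finset.sum_sub_distrib, Pi.sub_apply]
  exact Finset.sum_congr rfl fun v _ => by ring

theorem laplacian_smul (c : ℝ) (f : V → ℝ) (u : V) :
    laplacian wt (c • f) u = c * laplacian wt f u := by
  simp only [laplacian, potentialFlow, Finset.mul_sum, Pi.smul_apply, smul_eq_mul]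
  exact Finset.sum_congr rfl fun v _ => by ring

theorem sum_laplacian_eq_zero (hsymm : ∀ u v, wt u v = wt v u) (φ : V → ℝ) :
    ∑ u, laplacian wt φ u = 0 :=
  sum_sum_eq_zero_of_antisymm (potentialFlow_antisymm hsymm φ)

/-- At a vertex of degree `0` the recurrence divides by zero, but that vertex has no
neighbours, so both sides vanish. -/
theorem laplacian_eq_degree_of_recurrence (hnonneg : ∀ u v, 0 ≤ wt u v) {g : V → ℝ} {u : V}
    (hg : g u = 1 + ∑ v, (wt u v / ∑ z, wt u z) * g v) :
    laplacian wt g u = ∑ z, wt u z := by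
  have hlap : laplacian wt g u = (∑ z, wt u z) * g u - ∑ v, wt u v * g v := by
    simp only [laplacian, potentialFlow, mul_sub, Finset.sum_sub_distrib, Finset.sum_mul]
  by_cases hdeg : ∑ z, wt u z = 0
  · have hzero : ∀ v, wt u v = 0 :=
      fun v => (Finset.sum_eq_zero_iff_of_nonneg fun z _ => hnonneg u z).mp hdeg v
        (Finset.mem_univ v)
    simp [hlap, hzero]
  · rw [hlap, hg, mul_add, Finset.mul_sum]
    simp only [← mul_assoc, mul_div_cancel₀ _ hdeg]
    ring

theorem flowEnergy_nonneg (hnonneg : ∀ u v, 0 ≤ wt u v) (p : V → V → ℝ) :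
    0 ≤ flowEnergy wt p :=
  mul_nonneg (by norm_num) <| Finset.sum_nonneg fun u _ =>
    Finset.sum_nonneg fun v _ => div_nonneg (sq_nonneg _) (hnonneg u v)

theorem flowEnergy_potentialFlow (hsymm : ∀ u v, wt u v = wt v u)
    (φ : V → ℝ) : flowEnergy wt (potentialFlow wt φ) = ∑ u, φ u * laplacian wt φ u := by
  have hpoint : ∀ u v, potentialFlow wt φ u v ^ 2 / wt u v
      = (φ u - φ v) * potentialFlow wt φ u v := by
    intro u v
    by_cases h : wt u v = 0
    · simp [potentialFlow_eq_zero h]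
    · rw [potentialFlow]
      field_simp
  simp only [flowEnergy, hpoint,
    sum_sum_sub_mul_of_antisymm (potentialFlow_antisymm hsymm φ), laplacian]
  ring

theorem flowEnergy_potentialFlow_le (hsymm : ∀ u v, wt u v = wt v u)
    (hnonneg : ∀ u v, 0 ≤ wt u v) {φ : V → ℝ} {q : V → V → ℝ}
    (hanti : ∀ u v, q v u = -q u v) (hsupp : ∀ u v, wt u v = 0 → q u v = 0)
    (hrow : ∀ u, ∑ v, q u v = laplacian wt φ u) :
    flowEnergy wt (potentialFlow wt φ) ≤ flowEnergy wt q := by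
  set p := potentialFlow wt φ
  set d := q - p
  have hpoint : ∀ u v, q u v ^ 2 / wt u v
      = p u v ^ 2 / wt u v + d u v ^ 2 / wt u v + 2 * ((φ u - φ v) * d u v) := by
    intro u v
    by_cases h : wt u v = 0
    · simp [d, p, hsupp u v h, potentialFlow_eq_zero h]
    · simp only [d, p, Pi.sub_apply, potentialFlow]
      field_simp
      ring
  have hd_anti : ∀ u v, d v u = -d u v := fun u v => by
    simp only [d, p, Pi.sub_apply, hanti u v, potentialFlow_antisymm hsymm φ u v]
    ring
  have hcross : ∑ u, ∑ v, (φ u - φ v) * d u v = 0 := by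
    rw [sum_sum_sub_mul_of_antisymm hd_anti]
    simp only [d, Pi.sub_apply, Finset.sum_sub_distrib, hrow, laplacian, p, sub_self, mul_zero,
      Finset.sum_const_zero]
  have hsplit : flowEnergy wt q = flowEnergy wt p + flowEnergy wt d
      + ∑ u, ∑ v, (φ u - φ v) * d u v := by
    simp only [flowEnergy, hpoint, Finset.sum_add_distrib, ← Finset.mul_sum]
    ring
  linarith [flowEnergy_nonneg hnonneg d]

theorem isFlow_potentialFlow (hsymm : ∀ u v, wt u v = wt v u)
    (hnonneg : ∀ u v, 0 ≤ wt u v) {σ φ : V → ℝ} {M : Set V}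
    (hφ : ∀ u ∉ M, laplacian wt φ u = σ u) : IsFlow wt σ M (potentialFlow wt φ) := by
  refine ⟨potentialFlow_antisymm hsymm φ, fun u v h => ?_, hφ⟩
  exact (hnonneg u v).lt_of_ne' fun hw => h (potentialFlow_eq_zero hw)

end

theorem laplacian_hittingTime {wt : V → V → ℝ} (hsymm : ∀ u v, wt u v = wt v u)
    (hnonneg : ∀ u v, 0 ≤ wt u v) {a : V} {H : V → ℝ}
    (hH : ∀ u, u ≠ a → H u = 1 + ∑ v, (wt u v / ∑ z, wt u z) * H v) (u : V) :
    laplacian wt H u = ∑ z, wt u z - if u = a then ∑ x, ∑ z, wt x z else 0 := by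
  by_cases hu : u = a
  · subst hu
    have hsum := sum_laplacian_eq_zero hsymm H
    rw [← Finset.add_sum_erase _ _ (Finset.mem_univ u),
      Finset.sum_congr rfl fun x hx =>
        laplacian_eq_degree_of_recurrence hnonneg (hH x (Finset.ne_of_mem_erase hx)),
      Finset.sum_erase_eq_sub (Finset.mem_univ u)] at hsum
    rw [if_pos rfl]
    linarith
  · rw [if_neg hu, sub_zero]
    exact laplacian_eq_degree_of_recurrence hnonneg (hH u hu)

theorem IsFlow.sum_eq_single_sub_single {wt q : V → V → ℝ} {s t : V} (hst : s ≠ t)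
    (hq : IsFlow wt (fun u => if u = s then 1 else 0) {t} q) (u : V) :
    ∑ v, q u v = (if u = s then 1 else 0) - if u = t then 1 else 0 := by
  obtain ⟨hanti, -, hrow⟩ := hq
  by_cases hu : u = t
  · subst hu
    have htotal := sum_sum_eq_zero_of_antisymm hanti
    rw [← Finset.add_sum_erase _ _ (Finset.mem_univ u),
      Finset.sum_congr rfl fun x hx => hrow x (by simpa using Finset.ne_of_mem_erase hx),
      Finset.sum_ite_eq' _ s, if_pos (Finset.mem_erase.mpr ⟨hst, Finset.mem_univ s⟩)] at htotal
    rw [if_neg hst.symm, if_pos rfl]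
    linarith
  · rw [hrow u (by simpa using hu), if_neg hu, sub_zero]

theorem effResPt_eq_sub_of_laplacian {wt : V → V → ℝ} (hsymm : ∀ u v, wt u v = wt v u)
    (hnonneg : ∀ u v, 0 ≤ wt u v) {s t : V} (hst : s ≠ t) {φ : V → ℝ}
    (hφ : ∀ u, laplacian wt φ u = (if u = s then 1 else 0) - if u = t then 1 else 0) :
    effResPt wt s t = φ s - φ t := by
  have hunit : IsFlow wt (fun u => if u = s then 1 else 0) {t} (potentialFlow wt φ) :=
    isFlow_potentialFlow hsymm hnonneg fun u hu => by
      rw [hφ u, if_neg (show u ≠ t by simpa using hu), sub_zero]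
  have hleast : IsLeast
      {x | ∃ q, IsFlow wt (fun u => if u = s then 1 else 0) {t} q ∧ x = flowEnergy wt q}
      (flowEnergy wt (potentialFlow wt φ)) := by
    refine ⟨⟨_, hunit, rfl⟩, ?_⟩
    rintro _ ⟨q, hq, rfl⟩
    refine flowEnergy_potentialFlow_le hsymm hnonneg hq.1 (fun u v hw => ?_)
      fun u => (hq.sum_eq_single_sub_single hst u).trans (hφ u).symm
    by_contra hne
    exact (hq.2.1 u v hne).ne' hw
  rw [effResPt, hleast.csInf_eq, flowEnergy_potentialFlow hsymm]
  simp [hφ, mul_sub, Finset.sum_sub_distrib]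

theorem commute_time_identity_general
    (wt : V → V → ℝ)
    (hsymm : ∀ u v, wt u v = wt v u) (hnonneg : ∀ u v, 0 ≤ wt u v)
    (W : ℝ) (hW : W = (1 / 2) * ∑ u, ∑ v, wt u v) (hWpos : 0 < W)
    (s t : V) (hst : s ≠ t)
    (Hst Hts : V → ℝ)
    (hHstt : Hst t = 0)
    (hHstrec : ∀ u, u ≠ t → Hst u = 1 + ∑ v, (wt u v / ∑ z, wt u z) * Hst v)
    (hHtss : Hts s = 0)
    (hHtsrec : ∀ u, u ≠ s → Hts u = 1 + ∑ v, (wt u v / ∑ z, wt u z) * Hts v) :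
    Hst s + Hts t = 2 * W * effResPt wt s t := by
  have htotal : ∑ u, ∑ v, wt u v = 2 * W := by rw [hW]; ring
  set φ : V → ℝ := (2 * W)⁻¹ • (Hst - Hts)
  have hφ : ∀ u, laplacian wt φ u = (if u = s then 1 else 0) - if u = t then 1 else 0 := by
    intro u
    rw [laplacian_smul, laplacian_sub, laplacian_hittingTime hsymm hnonneg hHstrec,
      laplacian_hittingTime hsymm hnonneg hHtsrec, htotal]
    split_ifs <;> field_simp <;> ring
  rw [effResPt_eq_sub_of_laplacian hsymm hnonneg hst hφ]
  simp only [φ, Pi.smul_apply, Pi.sub_apply, smul_eq_mul, hHstt, hHtss]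
  field_simp
  ring

/-- Commute-time identity: for a finite connected weighted graph with total
weight `W` and distinct vertices `s`, `t`, one has `H_{s,t} + H_{t,s} = 2W·R_{s,t}`.
Hitting times to `t` (resp. to `s`) are characterized by their standard
recurrences. -/
theorem commute_time_identity
    [Nonempty V]
    (wt : V → V → ℝ)
    (hsymm : ∀ u v, wt u v = wt v u) (hnonneg : ∀ u v, 0 ≤ wt u v)
    (hloop : ∀ u, wt u u = 0)
    (hconn : ∀ u v, Relation.ReflTransGen (fun a b => 0 < wt a b) u v)
    (W : ℝ) (hW : W = (1 / 2) * ∑ u, ∑ v, wt u v) (hWpos : 0 < W)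
    (s t : V) (hst : s ≠ t)
    (Hst Hts : V → ℝ)
    (hHstt : Hst t = 0)
    (hHstrec : ∀ u, u ≠ t → Hst u = 1 + ∑ v, (wt u v / ∑ z, wt u z) * Hst v)
    (hHtss : Hts s = 0)
    (hHtsrec : ∀ u, u ≠ s → Hts u = 1 + ∑ v, (wt u v / ∑ z, wt u z) * Hts v) :
    Hst s + Hts t = 2 * W * effResPt wt s t :=
  commute_time_identity_general wt hsymm hnonneg W hW hWpos s t hst Hst Hts hHstt hHstrec hHtss
    hHtsrec

end
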